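/- Fix ε > 0 and 0 < δ < π/2, and take γ = π/2 and the fiducial vector η^{(ε,δ)}, so that E_{η^{(ε,δ)};π/2}(α) = (1/(δ e_{2ε}(δ,1))) · ω_{2ε}(α/δ)/cos α for |α| < δ (extended 2π-periodically, zero elsewhere on the period). Then the convolution of E_{η^{(ε,δ)};π/2} with the sawtooth function a coincides with a on the middle of the period: (E_{η^{(ε,δ)};π/2} ∗ a)(α) = α for every α ∈ [δ, 2π−δ]. -/

import Mathlib

open Real MeasureTheory

/-- The smooth bump profile `ω_ε(x) = exp(−ε/(1−x²))` for `|x| < 1`, `0` otherwise. -/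
noncomputable def ω (ε x : ℝ) : ℝ :=
  if |x| < 1 then Real.exp (-ε / (1 - x ^ 2)) else 0

/-- Reduction of `α` to the period interval `[−π, π)`. -/
noncomputable def toPi (α : ℝ) : ℝ := α - 2 * π * (⌊(α + π) / (2 * π)⌋ : ℝ)

/-- The 2π-periodic sawtooth (angle) function `a(α) = α` for `α ∈ [0, 2π)`. -/
noncomputable def saw (α : ℝ) : ℝ := α - 2 * π * (⌊α / (2 * π)⌋ : ℝ)

/-- `e_ε(δ,1) = ∫_{−1}^{1} ω_ε(x)/cos(δx) dx`. -/
noncomputable def eDel (ε δ : ℝ) : ℝ := ∫ x in (-1:ℝ)..1, ω ε x / Real.cos (δ * x)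

/-- The 2π-periodic function
`E_{η^{(ε,δ)};π/2}(α) = (1/(δ e_{2ε}(δ,1))) ω_{2ε}(α/δ)/cos α` for `|α| < δ`
(mod 2π), and `0` elsewhere on the period. -/
noncomputable def Ebump (ε δ : ℝ) (α : ℝ) : ℝ :=
  1 / (δ * eDel (2 * ε) δ) * ω (2 * ε) (toPi α / δ) / Real.cos α

/-!
For `α ∈ [δ, 2π − δ]` the window `|α − q| < δ` on which `E(α − q)` lives stays inside one period,
both for the reduction `toPi` and for the sawtooth, so the convolution is the integral of the
normalised bump `ω_{2ε}(x/δ)/cos x` against `α − x`. The bump is even, so its first moment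
vanishes, and its mass is `δ e_{2ε}(δ,1)`, which the normalisation cancels; what is left is `α`.
-/

open Set Function

lemma integrable_of_norm_le_of_support_subset {α E : Type*} [MeasurableSpace α] {μ : Measure α}
    [NormedAddCommGroup E] {f : α → E} {s : Set α} {M : ℝ} (hs : μ s ≠ ⊤)
    (hf : AEStronglyMeasurable f μ) (hM : ∀ x, ‖f x‖ ≤ M) (hsupp : support f ⊆ s) :
    Integrable f μ :=
  (integrableOn_iff_integrable_of_support_subset hsupp).1
    (Measure.integrableOn_of_bounded hs hf (ae_of_all _ hM))

lemma Real.cos_le_cos_of_abs_le {x y : ℝ} (hxy : |x| ≤ y) (hy : y ≤ π) : cos y ≤ cos x := by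
  rw [← cos_abs x]
  exact cos_le_cos_of_nonneg_of_le_pi (abs_nonneg x) hy hxy

lemma measurable_ω (ε : ℝ) : Measurable (ω ε) :=
  Measurable.ite (measurableSet_lt continuous_abs.measurable measurable_const) (by fun_prop)
    measurable_const

lemma ω_nonneg (ε x : ℝ) : 0 ≤ ω ε x := by
  unfold ω; split_ifs <;> positivity

lemma ω_le_one {ε : ℝ} (hε : 0 ≤ ε) (x : ℝ) : ω ε x ≤ 1 := by
  unfold ω; split_ifs with hx
  · have : 0 < 1 - x ^ 2 := by nlinarith [abs_lt.1 hx]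
    exact exp_le_one_iff.2 (div_nonpos_of_nonpos_of_nonneg (by linarith) this.le)
  · exact zero_le_one

lemma ω_neg (ε x : ℝ) : ω ε (-x) = ω ε x := by
  simp [ω, abs_neg]

lemma ω_of_one_le_abs (ε : ℝ) {x : ℝ} (hx : 1 ≤ |x|) : ω ε x = 0 :=
  if_neg hx.not_gt

lemma ω_pos (ε : ℝ) {x : ℝ} (hx : |x| < 1) : 0 < ω ε x := by
  rw [ω, if_pos hx]; exact exp_pos _

lemma ω_div_of_le_abs (ε : ℝ) {δ x : ℝ} (hδ : 0 < δ) (hx : δ ≤ |x|) : ω ε (x / δ) = 0 :=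
  ω_of_one_le_abs ε (by rwa [abs_div, abs_of_pos hδ, one_le_div hδ])

noncomputable def bumpKernel (ε δ x : ℝ) : ℝ := ω ε (x / δ) / cos x

namespace bumpKernel

variable {ε δ : ℝ}

lemma neg (x : ℝ) : bumpKernel ε δ (-x) = bumpKernel ε δ x := by
  rw [bumpKernel, bumpKernel, neg_div, ω_neg, cos_neg]

lemma of_le_abs (hδ : 0 < δ) {x : ℝ} (hx : δ ≤ |x|) : bumpKernel ε δ x = 0 := by
  rw [bumpKernel, ω_div_of_le_abs ε hδ hx, zero_div]

lemma support_subset (hδ : 0 < δ) : support (bumpKernel ε δ) ⊆ Ioo (-δ) δ :=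
  fun _ hx ↦ abs_lt.1 (not_le.1 fun h ↦ hx (of_le_abs hδ h))

lemma measurable (ε δ : ℝ) : Measurable (bumpKernel ε δ) :=
  ((measurable_ω ε).comp (measurable_id.div_const δ)).div measurable_cos

lemma abs_le (hε : 0 ≤ ε) (hδ : 0 < δ) (hδπ : δ < π / 2) (x : ℝ) :
    |bumpKernel ε δ x| ≤ 1 / cos δ := by
  have hcosδ : 0 < cos δ := cos_pos_of_mem_Ioo ⟨by linarith, hδπ⟩
  rcases lt_or_ge |x| δ with hx | hx
  · have hcos : cos δ ≤ cos x := cos_le_cos_of_abs_le hx.le (by linarith)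
    rw [bumpKernel, abs_of_nonneg (div_nonneg (ω_nonneg _ _) (hcosδ.trans_le hcos).le)]
    exact div_le_div₀ zero_le_one (ω_le_one hε _) hcosδ hcos
  · rw [of_le_abs hδ hx, abs_zero]; positivity

lemma integrable (hε : 0 ≤ ε) (hδ : 0 < δ) (hδπ : δ < π / 2) :
    Integrable (bumpKernel ε δ) :=
  integrable_of_norm_le_of_support_subset measure_Ioo_lt_top.ne
    (measurable ε δ).aestronglyMeasurable (abs_le hε hδ hδπ) (support_subset hδ)

lemma integrable_mul_id (hε : 0 ≤ ε) (hδ : 0 < δ) (hδπ : δ < π / 2) :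
    Integrable (fun x ↦ bumpKernel ε δ x * x) := by
  refine integrable_of_norm_le_of_support_subset (M := 1 / cos δ * δ) measure_Ioo_lt_top.ne
    ((measurable ε δ).mul measurable_id).aestronglyMeasurable (fun x ↦ ?_)
    ((support_mul_subset_left _ _).trans (support_subset hδ))
  rcases lt_or_ge |x| δ with hx | hx
  · rw [Real.norm_eq_abs, abs_mul]
    exact mul_le_mul (abs_le hε hδ hδπ x) hx.le (abs_nonneg _)
      ((abs_nonneg _).trans (abs_le hε hδ hδπ x))
  · rw [of_le_abs hδ hx, zero_mul, norm_zero]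
    exact mul_nonneg ((abs_nonneg _).trans (abs_le hε hδ hδπ x)) hδ.le

lemma integral_mul_id (ε δ : ℝ) : ∫ x, bumpKernel ε δ x * x = 0 := by
  have h := integral_neg_eq_self (fun x ↦ bumpKernel ε δ x * x) volume
  simp only [neg, mul_neg, integral_neg] at h
  linarith

lemma integral (hδ : 0 < δ) : ∫ x, bumpKernel ε δ x = δ * eDel ε δ := by
  have hsupp : support (fun y ↦ ω ε y / cos (δ * y)) ⊆ Ioc (-1) 1 := fun y hy ↦
    Ioo_subset_Ioc_self <| abs_lt.1 <| not_le.1 fun h ↦ hy <| by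
      simp only [ω_of_one_le_abs ε h, zero_div]
  calc ∫ x, bumpKernel ε δ x = ∫ x, (fun y ↦ ω ε y / cos (δ * y)) (x / δ) := by
        simp only [bumpKernel, mul_div_cancel₀ _ hδ.ne']
    _ = δ * eDel ε δ := by
        rw [Measure.integral_comp_div (fun y ↦ ω ε y / cos (δ * y)) δ, abs_of_pos hδ,
          smul_eq_mul, eDel, intervalIntegral.integral_eq_integral_of_support_subset hsupp]

lemma integral_pos (hε : 0 ≤ ε) (hδ : 0 < δ) (hδπ : δ < π / 2) :
    0 < ∫ x, bumpKernel ε δ x := by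
  have hcos : ∀ x ∈ Ioo (-δ) δ, 0 < cos x := fun x hx ↦
    cos_pos_of_mem_Ioo ⟨by linarith [hx.1], by linarith [hx.2]⟩
  have hnonneg : 0 ≤ bumpKernel ε δ := fun x ↦ by
    rcases lt_or_ge |x| δ with hx | hx
    · exact div_nonneg (ω_nonneg _ _) (hcos x (abs_lt.1 hx)).le
    · exact (of_le_abs hδ hx).ge
  rw [integral_pos_iff_support_of_nonneg hnonneg (integrable hε hδ hδπ)]
  refine (measure_mono fun x hx ↦ ?_).trans_lt'
    (by simp [hδ] : (0 : ENNReal) < volume (Ioo (-δ) δ))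
  refine (div_pos (ω_pos ε ?_) (hcos x hx)).ne'
  rw [abs_div, abs_of_pos hδ, div_lt_one hδ]
  exact abs_lt.2 hx

lemma integral_mul_sub (hε : 0 ≤ ε) (hδ : 0 < δ) (hδπ : δ < π / 2) (α : ℝ) :
    ∫ x, bumpKernel ε δ x * (α - x) = α * (δ * eDel ε δ) := by
  simp only [mul_sub]
  rw [integral_sub ((integrable hε hδ hδπ).mul_const α) (integrable_mul_id hε hδ hδπ),
    integral_mul_const, integral hδ, integral_mul_id, sub_zero, mul_comm]

lemma intervalIntegral_sub_mul {a b α : ℝ} (hδ : 0 < δ) (ha : a ≤ α - δ) (hb : α + δ ≤ b) :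
    ∫ q in a..b, bumpKernel ε δ (α - q) * q = ∫ x, bumpKernel ε δ x * (α - x) := by
  have h := intervalIntegral.integral_comp_sub_left (a := a) (b := b)
    (fun x ↦ bumpKernel ε δ x * (α - x)) α
  simp only [sub_sub_cancel] at h
  rw [h, intervalIntegral.integral_eq_integral_of_support_subset]
  exact (support_mul_subset_left _ _).trans <| (support_subset hδ).trans <|
    Ioo_subset_Ioc_self.trans (Ioc_subset_Ioc (by linarith) (by linarith))

end bumpKernel

lemma toPi_eq_sub_int_mul {x : ℝ} (n : ℤ) (h₁ : -π ≤ x - 2 * π * n) (h₂ : x - 2 * π * n < π) :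
    toPi x = x - 2 * π * n := by
  have : ⌊(x + π) / (2 * π)⌋ = n := by
    rw [Int.floor_eq_iff, le_div_iff₀ two_pi_pos, div_lt_iff₀ two_pi_pos]
    constructor <;> linarith
  rw [toPi, this]

lemma saw_eq_self {q : ℝ} (h₀ : 0 ≤ q) (h₁ : q < 2 * π) : saw q = q := by
  have : ⌊q / (2 * π)⌋ = 0 := by
    rw [Int.floor_eq_iff, le_div_iff₀ two_pi_pos, div_lt_iff₀ two_pi_pos]
    constructor <;> push_cast <;> linarith
  simp [saw, this]

lemma ω_toPi_div (ε : ℝ) {δ x : ℝ} (hδ : 0 < δ) (hx : |x| ≤ 2 * π - δ) :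
    ω ε (toPi x / δ) = ω ε (x / δ) := by
  -- off `[-π, π)` both `x` and `toPi x` are at least `δ` in absolute value, so both sides vanish
  obtain ⟨h₁, h₂⟩ := abs_le.1 hx
  rcases lt_or_ge x (-π) with hx₁ | hx₁
  · rw [toPi_eq_sub_int_mul (-1) (by push_cast; linarith) (by push_cast; linarith),
      ω_div_of_le_abs ε hδ, ω_div_of_le_abs ε hδ] <;>
    rw [le_abs]
    · right; linarith
    · left; push_cast; linarith
  rcases lt_or_ge x π with hx₂ | hx₂
  · rw [toPi_eq_sub_int_mul 0 (by simpa using hx₁) (by simpa using hx₂)]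
    simp
  · rw [toPi_eq_sub_int_mul 1 (by push_cast; linarith) (by push_cast; linarith),
      ω_div_of_le_abs ε hδ, ω_div_of_le_abs ε hδ] <;>
    rw [le_abs]
    · left; linarith
    · right; push_cast; linarith

lemma Ebump_eq_bumpKernel (ε : ℝ) {δ x : ℝ} (hδ : 0 < δ) (hx : |x| ≤ 2 * π - δ) :
    Ebump ε δ x = (δ * eDel (2 * ε) δ)⁻¹ * bumpKernel (2 * ε) δ x := by
  rw [Ebump, ω_toPi_div _ hδ hx, bumpKernel, one_div, mul_div_assoc]

lemma Ebump_sub_mul_saw (ε : ℝ) {δ α q : ℝ} (hδ : 0 < δ) (hα : α ∈ Icc δ (2 * π - δ))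
    (hq : q ∈ Icc 0 (2 * π)) :
    Ebump ε δ (α - q) * saw q = (δ * eDel (2 * ε) δ)⁻¹ * (bumpKernel (2 * ε) δ (α - q) * q) := by
  obtain ⟨hα₁, hα₂⟩ := hα
  obtain ⟨hq₁, hq₂⟩ := hq
  rw [Ebump_eq_bumpKernel ε hδ (abs_le.2 ⟨by linarith, by linarith⟩), mul_assoc]
  rcases hq₂.lt_or_eq with hq₂ | rfl
  · rw [saw_eq_self hq₁ hq₂]
  · rw [bumpKernel.of_le_abs hδ (by rw [abs_of_neg (by linarith)]; linarith)]
    simp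

/-- For `ε > 0`, `0 < δ < π/2`, `γ = π/2` and the fiducial vector `η^{(ε,δ)}`, the
periodic convolution of `E_{η^{(ε,δ)};π/2}` with the sawtooth function `a` coincides
with `a` on the middle of the period: `(E ∗ a)(α) = α` for every `α ∈ [δ, 2π−δ]`. -/
theorem convolution_equals_angle_in_middle (ε δ : ℝ) (hε : 0 < ε)
    (hδ0 : 0 < δ) (hδπ : δ < π / 2) :
    ∀ α ∈ Set.Icc δ (2 * π - δ),
      (∫ q in (0:ℝ)..(2 * π), Ebump ε δ (α - q) * saw q) = α := by
  intro α hα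
  have hmass : 0 < δ * eDel (2 * ε) δ :=
    bumpKernel.integral hδ0 ▸ bumpKernel.integral_pos (by positivity) hδ0 hδπ
  calc ∫ q in (0:ℝ)..(2 * π), Ebump ε δ (α - q) * saw q
      = (δ * eDel (2 * ε) δ)⁻¹ * ∫ q in (0:ℝ)..(2 * π), bumpKernel (2 * ε) δ (α - q) * q := by
        rw [← intervalIntegral.integral_const_mul]
        refine intervalIntegral.integral_congr fun q hq ↦ Ebump_sub_mul_saw ε hδ0 hα ?_
        rwa [uIcc_of_le two_pi_pos.le] at hq
    _ = (δ * eDel (2 * ε) δ)⁻¹ * (α * (δ * eDel (2 * ε) δ)) := by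
        rw [bumpKernel.intervalIntegral_sub_mul hδ0 (by linarith [hα.1]) (by linarith [hα.2]),
          bumpKernel.integral_mul_sub (by positivity) hδ0 hδπ]
    _ = α := by rw [mul_comm α, inv_mul_cancel_left₀ hmass.ne']
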